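/- Let F be a field of characteristic 0, and let (V₁, Π₁) and (V₂, Π₂) be systems of simple roots over F with (V₁, Π₁) irreducible. If φ: V₁ → V₂ is an F-linear map with φ(Π₁) ⊆ Π₂ and ⟨φ(α), φ(β)⟩ = ⟨α, β⟩ for all α, β ∈ Π₁, then φ is an orthogonal similitude: there exists λ ∈ F^× such that S₂(φ(x), φ(y)) = λ·S₁(x, y) for all x, y ∈ V₁. -/

import Mathlib

/-!
Since `⟨φ αᵢ, φ αᵢ⟩ = ⟨αᵢ, αᵢ⟩ = 2`, each `φ αᵢ` is non-isotropic, and bracket preservation says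
`S₂ (φ αᵢ) (φ αⱼ) = λᵢ S₁ αᵢ αⱼ` with `λᵢ = S₂ (φ αᵢ) (φ αᵢ) / S₁ αᵢ αᵢ ≠ 0`.
Comparing this with the same identity for `(j, i)` through the symmetry of both forms gives
`λᵢ = λⱼ` whenever `αᵢ` and `αⱼ` are not orthogonal, so `λ` is constant by irreducibility, and the
two bilinear forms `S₂ (φ ·) (φ ·)` and `λ S₁` agree on a basis.
-/

open LinearMap (BilinForm)

theorem eq_of_irreducible {ι α : Type*} {r : ι → ι → Prop} {f : ι → α}
    (hirr : ∀ s : Set ι, s.Nonempty → (∀ i ∈ s, ∀ j ∉ s, r i j) → s = Set.univ)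
    (hf : ∀ i j, ¬ r i j → f i = f j) (i j : ι) : f i = f j := by
  have hs := hirr {k | f k = f i} ⟨i, rfl⟩ fun k hk l hl ↦ by
    by_contra hkl
    exact hl ((hf k l hkl).symm.trans hk)
  have hj : j ∈ {k | f k = f i} := hs ▸ Set.mem_univ j
  exact hj.symm

theorem exists_ne_zero_forall_eq_of_forall_eq {ι M : Type*} [Zero M] [One M] [NeZero (1 : M)]
    {f : ι → M}
    (hf : ∀ i j, f i = f j) (hf₀ : ∀ i, f i ≠ 0) : ∃ l ≠ 0, ∀ i, f i = l := by
  rcases isEmpty_or_nonempty ι with _ | ⟨⟨i₀⟩⟩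
  · exact ⟨1, one_ne_zero, isEmptyElim⟩
  · exact ⟨f i₀, hf₀ i₀, fun i ↦ hf i i₀⟩

section SimpleRoots

variable {F : Type*} [Field F]

def cartanBracket {V : Type*} [AddCommGroup V] [Module F V] (S : BilinForm F V) (v w : V) : F :=
  2 * S v w / S v v

section CartanBracket

variable {V₁ V₂ : Type*} [AddCommGroup V₁] [Module F V₁] [AddCommGroup V₂] [Module F V₂]
  {S₁ : BilinForm F V₁} {S₂ : BilinForm F V₂}

theorem cartanBracket_self {v : V₁} (hv : S₁ v v ≠ 0) : cartanBracket S₁ v v = 2 :=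
  mul_div_cancel_right₀ 2 hv

theorem apply_self_ne_zero_of_cartanBracket_self_eq_two [NeZero (2 : F)] {v : V₁}
    (h : cartanBracket S₁ v v = 2) : S₁ v v ≠ 0 := by
  intro hv
  simp only [cartanBracket, hv, div_zero] at h
  exact two_ne_zero h.symm

theorem apply_eq_div_mul_of_cartanBracket_eq [NeZero (2 : F)] {v v' : V₁} {w w' : V₂}
    (hv : S₁ v v ≠ 0) (hw : S₂ w w ≠ 0)
    (h : cartanBracket S₂ w w' = cartanBracket S₁ v v') :
    S₂ w w' = S₂ w w / S₁ v v * S₁ v v' := by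
  unfold cartanBracket at h
  field_simp at h ⊢
  linear_combination h

end CartanBracket

section Family

variable [NeZero (2 : F)] {V₁ V₂ ι : Type*} [AddCommGroup V₁] [Module F V₁]
  [AddCommGroup V₂] [Module F V₂] {S₁ : BilinForm F V₁} {S₂ : BilinForm F V₂}
  {v : ι → V₁} {w : ι → V₂}
  (hv : ∀ i, S₁ (v i) (v i) ≠ 0)
  (hbr : ∀ i j, cartanBracket S₂ (w i) (w j) = cartanBracket S₁ (v i) (v j))
include hv hbr

theorem apply_self_ne_zero_of_cartanBracket_eq (i : ι) : S₂ (w i) (w i) ≠ 0 :=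
  apply_self_ne_zero_of_cartanBracket_self_eq_two ((hbr i i).trans (cartanBracket_self (hv i)))

theorem apply_eq_ratio_mul_of_cartanBracket_eq (i j : ι) :
    S₂ (w i) (w j) = S₂ (w i) (w i) / S₁ (v i) (v i) * S₁ (v i) (v j) :=
  apply_eq_div_mul_of_cartanBracket_eq (hv i) (apply_self_ne_zero_of_cartanBracket_eq hv hbr i)
    (hbr i j)

theorem ratio_eq_of_cartanBracket_eq (hS₁ : ∀ x y, S₁ x y = S₁ y x)
    (hS₂ : ∀ x y, S₂ x y = S₂ y x) {i j : ι} (hij : S₁ (v i) (v j) ≠ 0) :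
    S₂ (w i) (w i) / S₁ (v i) (v i) = S₂ (w j) (w j) / S₁ (v j) (v j) := by
  refine mul_right_cancel₀ hij ?_
  rw [← apply_eq_ratio_mul_of_cartanBracket_eq hv hbr, hS₂,
    apply_eq_ratio_mul_of_cartanBracket_eq hv hbr, hS₁ (v j) (v i)]

end Family

end SimpleRoots

theorem stmt_14 {F : Type*} [Field F] [CharZero F]
    {V₁ V₂ : Type*} [AddCommGroup V₁] [Module F V₁] [AddCommGroup V₂] [Module F V₂]
    (S₁ : LinearMap.BilinForm F V₁) (hS₁ : ∀ x y, S₁ x y = S₁ y x)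
    (S₂ : LinearMap.BilinForm F V₂) (hS₂ : ∀ x y, S₂ x y = S₂ y x)
    {n₁ : ℕ} (b₁ : Module.Basis (Fin n₁) F V₁)
    (hni₁ : ∀ i, S₁ (b₁ i) (b₁ i) ≠ 0)
    (hirr : ∀ s : Set (Fin n₁), s.Nonempty →
      (∀ i ∈ s, ∀ j ∉ s, S₁ (b₁ i) (b₁ j) = 0) → s = Set.univ)
    (φ : V₁ →ₗ[F] V₂)
    (hbr : ∀ i j, 2 * S₂ (φ (b₁ i)) (φ (b₁ j)) / S₂ (φ (b₁ i)) (φ (b₁ i)) =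
      2 * S₁ (b₁ i) (b₁ j) / S₁ (b₁ i) (b₁ i)) :
    ∃ l : F, l ≠ 0 ∧ ∀ x y, S₂ (φ x) (φ y) = l * S₁ x y := by
  obtain ⟨l, hl, hratio⟩ := exists_ne_zero_forall_eq_of_forall_eq
    (eq_of_irreducible hirr fun i j hij ↦ ratio_eq_of_cartanBracket_eq hni₁ hbr hS₁ hS₂ hij)
    fun i ↦ div_ne_zero (apply_self_ne_zero_of_cartanBracket_eq hni₁ hbr i) (hni₁ i)
  have hforms : S₂.compl₁₂ φ φ = l • S₁ := LinearMap.BilinForm.ext_basis b₁ fun i j ↦ by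
    simpa [hratio] using apply_eq_ratio_mul_of_cartanBracket_eq hni₁ hbr i j
  exact ⟨l, hl, fun x y ↦ by simpa using LinearMap.congr_fun₂ hforms x y⟩
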